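/- Assume ζ(c) < 0 for all c ∈ [0,1). Then for every c ∈ [0,1), γ(c) > x̃(c), where x̃(c) := (1 − c)θμ/ζ(c); consequently, for every x ≥ γ(c) one has (1 − c)(θμ − (λ + θ)x) ≥ −λΦ(c)x, i.e. the function (x, c) ↦ x(1 − c) satisfies the Hamilton–Jacobi–Bellman differential inequality on the region x ≥ γ(c). -/

import Mathlib

/-!
With `q = λ/θ` and the moments `M s z = ∫₀^∞ t^s exp(-t²/2 + z t) dt`, one has
`ψ x = M (q-1) (a(x-μ))` and `ψ' x = a M q (a(x-μ))`, and integration by parts gives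
`M (q+1) z = q M (q-1) z + z M q z`. At a point where `ψ γ = ψ' γ (γ - x̄₀)` this reads
`θ M (q+1) = a M q ((λ+θ)γ - λx̄₀ - θμ)`, so positivity of the moments gives
`γ > (λx̄₀ + θμ)/(λ+θ)`, which is `x̃`. The HJB inequality is `ζ x ≤ ζ x̃` for `x ≥ γ`, as `ζ < 0`.
-/

open MeasureTheory Real Set Filter Topology

/-- The (positive multiple of the) strictly increasing fundamental solution `ψ_λ` of the
Ornstein–Uhlenbeck equation `(1/2)σ² f'' + θ(μ - x) f' = λ f`, written as the integral
`ψ(x) = ∫₀^∞ t^(λ/θ - 1) exp(-t²/2 + a t (x - μ)) dt` with `a = √(2θ)/σ`. -/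
noncomputable def OUpsi (lam th mu sig : ℝ) (x : ℝ) : ℝ :=
  ∫ t in Set.Ioi (0:ℝ),
    t ^ (lam / th - 1) * Real.exp (-t ^ 2 / 2 + Real.sqrt (2 * th) / sig * t * (x - mu))

/-- `ζ(c) = (λ+θ)(1-c) - λΦ(c)`. -/
noncomputable def zetafun (lam th : ℝ) (Phi : ℝ → ℝ) (c : ℝ) : ℝ :=
  (lam + th) * (1 - c) - lam * Phi c

/-- `x̄₀(c) = θμΦ(c)/ζ(c)`. -/
noncomputable def xbar0fun (lam th mu : ℝ) (Phi : ℝ → ℝ) (c : ℝ) : ℝ :=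
  th * mu * Phi c / zetafun lam th Phi c

noncomputable def tiltedMoment (s z : ℝ) : ℝ :=
  ∫ t in Ioi (0:ℝ), t ^ s * exp (-t ^ 2 / 2 + z * t)

theorem continuousOn_tiltedMoment_integrand (s z : ℝ) :
    ContinuousOn (fun t : ℝ => t ^ s * exp (-t ^ 2 / 2 + z * t)) (Ioi 0) :=
  fun t ht => ((continuousAt_rpow_const t s (Or.inl ht.ne')).mul
    (by fun_prop)).continuousWithinAt

theorem integrableOn_tiltedMoment_integrand {s : ℝ} (hs : -1 < s) (z : ℝ) :
    IntegrableOn (fun t : ℝ => t ^ s * exp (-t ^ 2 / 2 + z * t)) (Ioi 0) := by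
  refine ((integrableOn_rpow_mul_exp_neg_mul_sq (b := 1 / 4) (by norm_num) hs).const_mul
    (exp (z ^ 2))).mono'
    ((continuousOn_tiltedMoment_integrand s z).aestronglyMeasurable measurableSet_Ioi) ?_
  filter_upwards [ae_restrict_mem measurableSet_Ioi] with t (ht : 0 < t)
  -- completing the square: `-t²/2 + z t ≤ z² - t²/4`
  have hexp : exp (-t ^ 2 / 2 + z * t) ≤ exp (z ^ 2) * exp (-(1 / 4) * t ^ 2) := by
    rw [← exp_add, exp_le_exp]
    nlinarith [sq_nonneg (z - t / 2)]
  rw [norm_of_nonneg (by positivity), mul_left_comm]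
  gcongr

theorem tiltedMoment_pos {s : ℝ} (hs : -1 < s) (z : ℝ) : 0 < tiltedMoment s z := by
  refine (setIntegral_pos_iff_support_of_nonneg_ae ?_
    (integrableOn_tiltedMoment_integrand hs z)).2 ?_
  · filter_upwards [ae_restrict_mem measurableSet_Ioi] with t (ht : 0 < t)
    positivity
  · have hsupp : Ioi (0:ℝ) ⊆ Function.support fun t : ℝ => t ^ s * exp (-t ^ 2 / 2 + z * t) :=
      fun t (ht : 0 < t) => (by positivity : (0:ℝ) < _).ne'
    rw [inter_eq_right.2 hsupp, volume_Ioi]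
    simp

theorem hasDerivAt_tiltedMoment {s : ℝ} (hs : -1 < s) (z : ℝ) :
    HasDerivAt (tiltedMoment s) (tiltedMoment (s + 1) z) z := by
  have hderiv : ∀ t > (0:ℝ), ∀ y, HasDerivAt (fun y => t ^ s * exp (-t ^ 2 / 2 + y * t))
      (t ^ (s + 1) * exp (-t ^ 2 / 2 + y * t)) y := fun t ht y => by
    refine ((((hasDerivAt_id y).mul_const t).const_add (-t ^ 2 / 2)).exp.const_mul
      (t ^ s)).congr_deriv ?_
    rw [rpow_add_one ht.ne']
    simp only [id, one_mul]
    ring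
  refine (hasDerivAt_integral_of_dominated_loc_of_deriv_le (μ := volume.restrict (Ioi 0))
    (F' := fun y t => t ^ (s + 1) * exp (-t ^ 2 / 2 + y * t))
    (bound := fun t => t ^ (s + 1) * exp (-t ^ 2 / 2 + (|z| + 1) * t))
    (Metric.ball_mem_nhds z one_pos)
    (.of_forall fun y =>
      (continuousOn_tiltedMoment_integrand s y).aestronglyMeasurable measurableSet_Ioi)
    (integrableOn_tiltedMoment_integrand hs z)
    (integrableOn_tiltedMoment_integrand (by linarith) z).aestronglyMeasurable ?_
    (integrableOn_tiltedMoment_integrand (by linarith) _) ?_).2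
  · filter_upwards [ae_restrict_mem measurableSet_Ioi] with t (ht : 0 < t) y hy
    have hy' : y ≤ |z| + 1 := by
      have := (abs_lt.1 (mem_ball_iff_norm.1 hy)).2
      linarith [le_abs_self z]
    rw [norm_of_nonneg (by positivity)]
    gcongr
  · filter_upwards [ae_restrict_mem measurableSet_Ioi] with t (ht : 0 < t) y _
    exact hderiv t ht y

/-- Integration by parts against `d/dt exp(-t²/2 + zt) = (z - t) exp(-t²/2 + zt)`. -/
theorem tiltedMoment_add_one {q : ℝ} (hq : 0 < q) (z : ℝ) :
    tiltedMoment (q + 1) z = q * tiltedMoment (q - 1) z + z * tiltedMoment q z := by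
  set f : ℝ → ℝ := fun t => t ^ q * exp (-t ^ 2 / 2 + z * t)
  set f' : ℝ → ℝ := fun t => q * (t ^ (q - 1) * exp (-t ^ 2 / 2 + z * t))
      + z * (t ^ q * exp (-t ^ 2 / 2 + z * t)) - t ^ (q + 1) * exp (-t ^ 2 / 2 + z * t)
  have hderiv : ∀ t ∈ Ioi (0:ℝ), HasDerivAt f (f' t) t := fun t (ht : 0 < t) => by
    have hE : HasDerivAt (fun t : ℝ => -t ^ 2 / 2 + z * t) (z - t) t := by
      refine (((hasDerivAt_pow 2 t).neg.div_const 2).add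
        ((hasDerivAt_id t).const_mul z)).congr_deriv ?_
      norm_num
      ring
    refine ((hasDerivAt_rpow_const (p := q) (Or.inl ht.ne')).mul hE.exp).congr_deriv ?_
    simp only [f', rpow_add_one ht.ne']
    ring
  have hint_lo := (integrableOn_tiltedMoment_integrand (s := q - 1) (by linarith) z).const_mul q
  have hint_mid := (integrableOn_tiltedMoment_integrand (s := q) (by linarith) z).const_mul z
  have hint_hi := integrableOn_tiltedMoment_integrand (s := q + 1) (by linarith) z
  have hf'int : IntegrableOn f' (Ioi 0) := (hint_lo.add hint_mid).sub hint_hi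
  have hf0 : f 0 = 0 := by simp [f, zero_rpow hq.ne']
  have hcont : ContinuousWithinAt f (Ici 0) 0 :=
    ((continuousAt_rpow_const 0 q (Or.inr hq.le)).mul (by fun_prop)).continuousWithinAt
  have hlim : Tendsto f atTop (𝓝 0) :=
    tendsto_zero_of_hasDerivAt_of_integrableOn_Ioi hderiv hf'int
      (integrableOn_tiltedMoment_integrand (by linarith) z)
  have hftc := integral_Ioi_of_hasDerivAt_of_tendsto hcont hderiv hf'int hlim
  simp only [f'] at hftc
  rw [hf0, sub_zero, integral_sub (by exact hint_lo.add hint_mid) hint_hi,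
    integral_add hint_lo hint_mid, integral_const_mul, integral_const_mul] at hftc
  unfold tiltedMoment
  linarith

theorem OUpsi_eq_tiltedMoment (lam th mu sig x : ℝ) :
    OUpsi lam th mu sig x = tiltedMoment (lam / th - 1) (√(2 * th) / sig * (x - mu)) := by
  unfold OUpsi tiltedMoment
  congr! 4 with t
  ring

theorem hasDerivAt_OUpsi {lam th : ℝ} (h : 0 < lam / th) (mu sig x : ℝ) :
    HasDerivAt (OUpsi lam th mu sig)
      (√(2 * th) / sig * tiltedMoment (lam / th) (√(2 * th) / sig * (x - mu))) x := by
  have hM :=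
    hasDerivAt_tiltedMoment (s := lam / th - 1) (by linarith) (√(2 * th) / sig * (x - mu))
  rw [sub_add_cancel] at hM
  rw [funext (OUpsi_eq_tiltedMoment lam th mu sig)]
  refine (hM.comp x (((hasDerivAt_id x).sub_const mu).const_mul _)).congr_deriv ?_
  ring

theorem weighted_avg_lt_of_OUpsi_eq_deriv_mul_sub {lam th mu sig x B : ℝ} (hlam : 0 < lam)
    (hth : 0 < th) (hsig : 0 < sig)
    (h : OUpsi lam th mu sig x = deriv (OUpsi lam th mu sig) x * (x - B)) :
    (lam * B + th * mu) / (lam + th) < x := by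
  have hq : 0 < lam / th := by positivity
  rw [OUpsi_eq_tiltedMoment, (hasDerivAt_OUpsi hq mu sig x).deriv] at h
  set a := √(2 * th) / sig
  have ha : 0 < a := by positivity
  set z := a * (x - mu)
  have hibp : th * tiltedMoment (lam / th + 1) z
      = a * tiltedMoment (lam / th) z * ((lam + th) * x - (lam * B + th * mu)) := by
    rw [tiltedMoment_add_one hq z, h]
    field_simp
    ring
  have hpos : 0 < a * tiltedMoment (lam / th) z * ((lam + th) * x - (lam * B + th * mu)) :=
    hibp ▸ mul_pos hth (tiltedMoment_pos (by linarith) z)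
  have := pos_of_mul_pos_right hpos (mul_pos ha (tiltedMoment_pos (by linarith) z)).le
  rw [div_lt_iff₀ (by positivity)]
  linarith

theorem weighted_avg_xbar0fun_eq {lam th mu : ℝ} {Phi : ℝ → ℝ} {c : ℝ}
    (hζ : zetafun lam th Phi c ≠ 0) (hsum : lam + th ≠ 0) :
    (lam * xbar0fun lam th mu Phi c + th * mu) / (lam + th)
      = (1 - c) * th * mu / zetafun lam th Phi c := by
  rw [div_eq_div_iff hsum hζ, xbar0fun]
  field_simp
  unfold zetafun
  ring

theorem hjb_inequality_of_div_zetafun_le {lam th mu : ℝ} {Phi : ℝ → ℝ} {c x : ℝ}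
    (hζ : zetafun lam th Phi c < 0) (hx : (1 - c) * th * mu / zetafun lam th Phi c ≤ x) :
    -(lam * Phi c * x) ≤ (1 - c) * (th * mu - (lam + th) * x) := by
  rw [div_le_iff_of_neg hζ, zetafun] at hx
  linarith

theorem statement15_general (lam th mu sig : ℝ)
    (hlam : 0 < lam) (hth : 0 < th) (hsig : 0 < sig)
    (Phi : ℝ → ℝ)
    (hzeta : ∀ c ∈ Set.Ico (0:ℝ) 1, zetafun lam th Phi c < 0)
    (gamma : ℝ → ℝ)
    (hgamma : ∀ c ∈ Set.Ico (0:ℝ) 1,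
      OUpsi lam th mu sig (gamma c)
        = deriv (OUpsi lam th mu sig) (gamma c) * (gamma c - xbar0fun lam th mu Phi c) ∧
      xbar0fun lam th mu Phi c < gamma c ∧
      ∀ y : ℝ, OUpsi lam th mu sig y
        = deriv (OUpsi lam th mu sig) y * (y - xbar0fun lam th mu Phi c) → y = gamma c)
    :
    ∀ c ∈ Set.Ico (0:ℝ) 1,
      (1 - c) * th * mu / zetafun lam th Phi c < gamma c ∧
      ∀ x : ℝ, gamma c ≤ x →
        -(lam * Phi c * x) ≤ (1 - c) * (th * mu - (lam + th) * x) := by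
  intro c hc
  have hγ : (1 - c) * th * mu / zetafun lam th Phi c < gamma c := by
    rw [← weighted_avg_xbar0fun_eq (hzeta c hc).ne (by positivity)]
    exact weighted_avg_lt_of_OUpsi_eq_deriv_mul_sub hlam hth hsig (hgamma c hc).1
  exact ⟨hγ, fun x hx => hjb_inequality_of_div_zetafun_le (hzeta c hc) (hγ.le.trans hx)⟩

/-- assume `ζ < 0` on `[0,1)`. Then for every `c ∈ [0,1)`,
`γ(c) > x̃(c) := (1-c)θμ/ζ(c)`; consequently for every `x ≥ γ(c)` one has
`(1-c)(θμ - (λ+θ)x) ≥ -λΦ(c)x` (the HJB inequality for `(x,c) ↦ x(1-c)` on `x ≥ γ(c)`). -/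
theorem statement15 (lam th mu sig : ℝ)
    (hlam : 0 < lam) (hth : 0 < th) (hmu : 0 < mu) (hsig : 0 < sig)
    (Phi : ℝ → ℝ) (hPhiC2 : ContDiff ℝ 2 Phi)
    (hPhiconv : StrictConvexOn ℝ Set.univ Phi)
    (hPhi' : ∀ c ∈ Set.Icc (0:ℝ) 1, deriv Phi c < 0) (hPhi1 : Phi 1 = 0)
    (hzeta : ∀ c ∈ Set.Ico (0:ℝ) 1, zetafun lam th Phi c < 0)
    (gamma : ℝ → ℝ)
    (hgamma : ∀ c ∈ Set.Ico (0:ℝ) 1,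
      OUpsi lam th mu sig (gamma c)
        = deriv (OUpsi lam th mu sig) (gamma c) * (gamma c - xbar0fun lam th mu Phi c) ∧
      xbar0fun lam th mu Phi c < gamma c ∧
      ∀ y : ℝ, OUpsi lam th mu sig y
        = deriv (OUpsi lam th mu sig) y * (y - xbar0fun lam th mu Phi c) → y = gamma c)
    :
    ∀ c ∈ Set.Ico (0:ℝ) 1,
      (1 - c) * th * mu / zetafun lam th Phi c < gamma c ∧
      ∀ x : ℝ, gamma c ≤ x →
        -(lam * Phi c * x) ≤ (1 - c) * (th * mu - (lam + th) * x) :=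
  statement15_general lam th mu sig hlam hth hsig Phi hzeta gamma hgamma
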